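/- Let (X, d) be a proper, uniquely geodesic, straight metric space which is C¹ along geodesics and has constant distance variation. Let γ be a geodesic ray based at b, and let α be a bi-infinite geodesic with α(0) lying in the image of γ. Then for every ξ ∈ Π_b^{-1}(γ) (i.e. ξ in the horoboundary with ξ(γ t) = −t for all t ≥ 0), the function t ↦ ξ(α(t)) is differentiable at t = 0, and the value of this derivative is the same for all ξ ∈ Π_b^{-1}(γ). -/

import Mathlib

open Filter Topology
open scoped NNReal ENNReal

variable {X : Type*} [MetricSpace X]

/-- `γ` restricted to the set `s ⊆ ℝ` is a (unit-speed) geodesic: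
`dist (γ u) (γ v) = |u - v|` for all `u, v ∈ s`. -/
def IsGeodesicOn (γ : ℝ → X) (s : Set ℝ) : Prop :=
  ∀ u ∈ s, ∀ v ∈ s, dist (γ u) (γ v) = |u - v|

/-- `X` is uniquely geodesic: any two distinct points are joined by a geodesic
parametrized on `[0, dist a c]`, and any two such geodesics agree on that interval. -/
def UniquelyGeodesic (X : Type*) [MetricSpace X] : Prop :=
  ∀ a c : X, a ≠ c →
    ∃ γ : ℝ → X,
      (IsGeodesicOn γ (Set.Icc 0 (dist a c)) ∧ γ 0 = a ∧ γ (dist a c) = c) ∧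
        ∀ γ' : ℝ → X,
          (IsGeodesicOn γ' (Set.Icc 0 (dist a c)) ∧ γ' 0 = a ∧ γ' (dist a c) = c) →
            Set.EqOn γ' γ (Set.Icc 0 (dist a c))

/-- `X` is straight: every geodesic defined on a nondegenerate closed interval extends to a
unique bi-infinite geodesic (an isometric embedding of `ℝ`). -/
def Straight (X : Type*) [MetricSpace X] : Prop :=
  ∀ (γ : ℝ → X) (a c : ℝ), a < c → IsGeodesicOn γ (Set.Icc a c) →
    ∃! γ' : ℝ → X, Isometry γ' ∧ Set.EqOn γ' γ (Set.Icc a c)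

/-- The space `D_b` of geodesic rays based at `b`, as a subspace of `C(ℝ≥0, X)`
(with the compact-open topology, i.e. uniform convergence on compact sets). -/
abbrev GeodesicRay (X : Type*) [MetricSpace X] (b : X) :=
  {γ : C(ℝ≥0, X) // Isometry ⇑γ ∧ γ 0 = b}

/-- The horofunction embedding `h : X → C(X, ℝ)`, `h x y = d(x, y) - d(x, b)`. -/
noncomputable def horo (b x : X) : C(X, ℝ) :=
  ⟨fun y => dist x y - dist x b,
    (continuous_const.dist continuous_id).sub continuous_const⟩

/-- The horoboundary of `X` (with basepoint `b`): the closure of `h(X)` in `C(X, ℝ)`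
minus `h(X)`. -/
def horoboundary (b : X) : Set C(X, ℝ) :=
  closure (Set.range (horo b)) \ Set.range (horo b)

/-- The setoid on `D_b × M` identifying all points whose second coordinate is `0`. -/
def collapseSetoid (X : Type*) [MetricSpace X] (b : X) (M : Type*) [Zero M] :
    Setoid (GeodesicRay X b × M) where
  r p q := p = q ∨ (p.2 = 0 ∧ q.2 = 0)
  iseqv := by
    refine ⟨fun _ => Or.inl rfl, ?_, ?_⟩
    · rintro p q (rfl | ⟨h1, h2⟩)
      · exact Or.inl rfl
      · exact Or.inr ⟨h2, h1⟩
    · rintro p q r (rfl | ⟨h1, h2⟩) (rfl | ⟨h3, h4⟩)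
      · exact Or.inl rfl
      · exact Or.inr ⟨h3, h4⟩
      · exact Or.inr ⟨h1, h2⟩
      · exact Or.inr ⟨h1, h4⟩

/-- The visual compactification `X̄_b = (D_b × [0, ∞]) / (D_b × {0})`. -/
abbrev VisualCompactification (X : Type*) [MetricSpace X] (b : X) :=
  Quotient (collapseSetoid X b ℝ≥0∞)

/-- `X` is C¹ along geodesics: for a bi-infinite geodesic `γ` and a point `p` off `γ`,
`t ↦ d(γ t, p)` is differentiable, and the derivative depends continuously on `(t, p)`. -/
def C1AlongGeodesics (X : Type*) [MetricSpace X] : Prop :=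
  ∀ γ : ℝ → X, Isometry γ →
    (∀ p, p ∉ Set.range γ → ∀ t : ℝ, DifferentiableAt ℝ (fun s => dist (γ s) p) t) ∧
      ContinuousOn (fun q : ℝ × X => deriv (fun s => dist (γ s) q.2) q.1)
        {q : ℝ × X | q.2 ∉ Set.range γ}

/-- `X` has constant distance variation: for distinct bi-infinite geodesics `γ, η` with
`γ 0 = η 0`, either `(d/dt) d(γ t, η s)|_{t=0}` exists for all `s > 0` and is independent
of `s`, or it exists for no `s > 0`. -/
def ConstantDistanceVariation (X : Type*) [MetricSpace X] : Prop :=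
  ∀ γ η : ℝ → X, Isometry γ → Isometry η → γ 0 = η 0 → γ ≠ η →
    ((∀ s : ℝ, 0 < s → DifferentiableAt ℝ (fun t => dist (γ t) (η s)) 0) ∧
        ∀ s s' : ℝ, 0 < s → 0 < s' →
          deriv (fun t => dist (γ t) (η s)) 0 = deriv (fun t => dist (γ t) (η s')) 0) ∨
      ∀ s : ℝ, 0 < s → ¬ DifferentiableAt ℝ (fun t => dist (γ t) (η s)) 0

/-! Extend `γ` to a bi-infinite geodesic `ℓ` with `ℓ 0 = b`. Every `ξ` in the fiber is
`1`-Lipschitz with `ξ (ℓ r) = -r` for `r ≥ 0`, and in fact for every real `r`. Writing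
`α 0 = ℓ s₀`, the function `t ↦ ξ (α t)` is then squeezed between
`1 - s₀ - d(α t, ℓ (s₀ - 1))` and `d(α t, ℓ (s₀ + 1)) - s₀ - 1`, which agree at `t = 0` and have
the same derivative there because `d(α t, ℓ (s₀ - 1)) + d(α t, ℓ (s₀ + 1))` is minimal at `t = 0`.
So the derivative exists and equals that of `t ↦ d(α t, ℓ (s₀ + 1))`, whatever `ξ` is. -/

open Set Metric

lemma abs_sub_eq_of_le {x y : ℝ} (h : x ≤ y) : |x - y| = y - x := by
  rw [abs_of_nonpos (sub_nonpos.mpr h), neg_sub]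

lemma Isometry.isGeodesicOn {ℓ : ℝ → X} (hℓ : Isometry ℓ) (s : Set ℝ) : IsGeodesicOn ℓ s :=
  fun u _ v _ => by rw [hℓ.dist_eq, Real.dist_eq]

lemma IsGeodesicOn.piecewise {β ℓ : ℝ → X} {a m c : ℝ} (hβ : IsGeodesicOn β (Icc a m))
    (hℓ : IsGeodesicOn ℓ (Icc m c)) (hm : β m = ℓ m) (hac : dist (β a) (ℓ c) = c - a) :
    IsGeodesicOn (fun w => if w ≤ m then β w else ℓ w) (Icc a c) := by
  suffices key : ∀ w₁ ∈ Icc a c, ∀ w₂ ∈ Icc a c, w₁ ≤ w₂ →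
      dist (if w₁ ≤ m then β w₁ else ℓ w₁) (if w₂ ≤ m then β w₂ else ℓ w₂) = w₂ - w₁ by
    intro w₁ hw₁ w₂ hw₂
    rcases le_total w₁ w₂ with h | h
    · rw [key w₁ hw₁ w₂ hw₂ h, abs_sub_eq_of_le h]
    · rw [dist_comm, key w₂ hw₂ w₁ hw₁ h, abs_sub_comm, abs_sub_eq_of_le h]
  intro w₁ hw₁ w₂ hw₂ h₁₂
  by_cases h₂ : w₂ ≤ m
  · rw [if_pos (h₁₂.trans h₂), if_pos h₂, hβ w₁ ⟨hw₁.1, h₁₂.trans h₂⟩ w₂ ⟨hw₂.1, h₂⟩,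
      abs_sub_eq_of_le h₁₂]
  have hm₂ := (not_le.mp h₂).le
  by_cases h₁ : w₁ ≤ m
  · rw [if_pos h₁, if_neg h₂]
    have hβ₁ := hβ a ⟨le_rfl, hw₁.1.trans h₁⟩ w₁ ⟨hw₁.1, h₁⟩
    have hβ₂ := hβ w₁ ⟨hw₁.1, h₁⟩ m ⟨hw₁.1.trans h₁, le_rfl⟩
    have hℓ₁ := hℓ m ⟨le_rfl, hm₂.trans hw₂.2⟩ w₂ ⟨hm₂, hw₂.2⟩
    have hℓ₂ := hℓ w₂ ⟨hm₂, hw₂.2⟩ c ⟨hm₂.trans hw₂.2, le_rfl⟩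
    rw [abs_sub_eq_of_le hw₁.1] at hβ₁
    rw [abs_sub_eq_of_le h₁, hm] at hβ₂
    rw [abs_sub_eq_of_le hm₂] at hℓ₁
    rw [abs_sub_eq_of_le hw₂.2] at hℓ₂
    have hup := dist_triangle (β w₁) (ℓ m) (ℓ w₂)
    have hlow := dist_triangle4 (β a) (β w₁) (ℓ w₂) (ℓ c)
    linarith
  · rw [if_neg h₁, if_neg h₂, hℓ w₁ ⟨(not_le.mp h₁).le, hw₁.2⟩ w₂ ⟨hm₂, hw₂.2⟩,
      abs_sub_eq_of_le h₁₂]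

lemma Straight.eq_of_eqOn (hS : Straight X) {ℓ₁ ℓ₂ : ℝ → X} (h₁ : Isometry ℓ₁)
    (h₂ : Isometry ℓ₂) {a c : ℝ} (hac : a < c) (h : EqOn ℓ₁ ℓ₂ (Icc a c)) : ℓ₁ = ℓ₂ :=
  (hS ℓ₂ a c hac (h₂.isGeodesicOn _)).unique ⟨h₁, h⟩ ⟨h₂, eqOn_refl _ _⟩

lemma Straight.exists_isometry_extend_geodesicRay (hS : Straight X) {b : X}
    (γ : GeodesicRay X b) : ∃ ℓ : ℝ → X, Isometry ℓ ∧ ∀ t : ℝ≥0, ℓ t = γ.1 t := by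
  set ρ : ℝ → X := fun r => γ.1 r.toNNReal
  have hρ : ∀ c, IsGeodesicOn ρ (Icc 0 c) := fun c u hu v hv => by
    simp only [ρ, γ.2.1.dist_eq, NNReal.dist_eq, Real.coe_toNNReal _ hu.1,
      Real.coe_toNNReal _ hv.1]
  obtain ⟨ℓ, ⟨hℓ, hℓρ⟩, -⟩ := hS ρ 0 1 one_pos (hρ 1)
  refine ⟨ℓ, hℓ, fun t => ?_⟩
  obtain ⟨ℓ', ⟨hℓ', hℓ'ρ⟩, -⟩ := hS ρ 0 (t + 1) (by positivity) (hρ _)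
  have hℓ'ℓ : ℓ' = ℓ := hS.eq_of_eqOn hℓ' hℓ one_pos fun r hr =>
    (hℓ'ρ ⟨hr.1, by linarith [hr.2, t.2]⟩).trans (hℓρ hr).symm
  rw [← hℓ'ℓ]
  simpa [ρ] using hℓ'ρ ⟨t.2, le_add_of_nonneg_right zero_le_one⟩

lemma exists_isometry_apply_zero_apply_dist (hU : UniquelyGeodesic X) (hS : Straight X)
    {a c : X} (hac : a ≠ c) : ∃ ℓ : ℝ → X, Isometry ℓ ∧ ℓ 0 = a ∧ ℓ (dist a c) = c := by
  obtain ⟨σ, ⟨hσ, hσ0, hσc⟩, -⟩ := hU a c hac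
  obtain ⟨ℓ, ⟨hℓ, hℓσ⟩, -⟩ := hS σ 0 (dist a c) (dist_pos.mpr hac) hσ
  exact ⟨ℓ, hℓ, (hℓσ ⟨le_rfl, dist_nonneg⟩).trans hσ0, (hℓσ ⟨dist_nonneg, le_rfl⟩).trans hσc⟩

/-- A point at distance `u` from `ℓ 0` and `u + 1` from `ℓ 1` lies on the line `ℓ`: the segment
from it to `ℓ 0` followed by `ℓ` is a geodesic, and straightness forces its extension to be `ℓ`. -/
lemma eq_apply_neg_of_dist_eq (hU : UniquelyGeodesic X) (hS : Straight X) {ℓ : ℝ → X}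
    (hℓ : Isometry ℓ) {y : X} {u : ℝ} (hu : 0 < u) (hy₀ : dist y (ℓ 0) = u)
    (hy₁ : dist y (ℓ 1) = u + 1) : y = ℓ (-u) := by
  obtain ⟨σ, ⟨hσ, hσ0, hσu⟩, -⟩ := hU y (ℓ 0) (dist_pos.mp (hy₀ ▸ hu))
  rw [hy₀] at hσ hσu
  have hshift : Isometry fun w => ℓ (w - u) := hℓ.comp (IsometryEquiv.subRight u).isometry
  have hρ := hσ.piecewise (hshift.isGeodesicOn (Icc u (u + 1))) (by simpa using hσu)
    (by simpa [hσ0] using hy₁)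
  obtain ⟨L, ⟨hL, hLρ⟩, -⟩ := hS _ 0 (u + 1) (by linarith) hρ
  have hLℓ : L = fun w => ℓ (w - u) := hS.eq_of_eqOn hL hshift (lt_add_one u) fun w hw => by
    rw [hLρ ⟨hu.le.trans hw.1, hw.2⟩]
    rcases hw.1.eq_or_lt with rfl | hw'
    · simpa using hσu
    · simp [not_le.mpr hw']
  have hL0 : L 0 = y := by simpa [hσ0, hu.le] using hLρ ⟨le_rfl, by linarith⟩
  simpa [hL0] using congrFun hLℓ 0

section Horofunction

variable {b : X} {ξ : C(X, ℝ)}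

lemma sub_le_dist_of_mem_closure_range_horo (hξ : ξ ∈ closure (range (horo b))) (y z : X) :
    ξ y - ξ z ≤ dist y z := by
  refine closure_minimal ?_
    (isClosed_le ((continuous_eval_const y).sub (continuous_eval_const z)) continuous_const) hξ
  rintro - ⟨x, rfl⟩
  change dist x y - dist x b - (dist x z - dist x b) ≤ dist y z
  linarith [dist_triangle x z y, dist_comm z y]

lemma apply_self_eq_zero_of_mem_closure_range_horo (hξ : ξ ∈ closure (range (horo b))) :
    ξ b = 0 := by
  refine closure_minimal ?_ (isClosed_eq (continuous_eval_const b) continuous_const) hξ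
  rintro - ⟨x, rfl⟩
  simp [horo]

/-- Approximating `ξ` uniformly on `closedBall b u` by some `horo b x` with `x ≠ b`, the point
at distance `u` from `b` on the far side of the line through `x` and `b` has `horo b x`-value
exactly `u`; a maximizer of `ξ` on the ball therefore has value `u`. -/
lemma exists_dist_eq_apply_eq_of_mem_horoboundary [ProperSpace X] (hU : UniquelyGeodesic X)
    (hS : Straight X) (hξ : ξ ∈ horoboundary b) {u : ℝ} (hu : 0 < u) :
    ∃ y, dist y b = u ∧ ξ y = u := by
  have hK := isCompact_closedBall b u
  obtain ⟨y, hyK, hymax⟩ := hK.exists_isMaxOn (nonempty_closedBall.mpr hu.le)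
    ξ.continuous.continuousOn
  have hlip := sub_le_dist_of_mem_closure_range_horo hξ.1 y b
  rw [apply_self_eq_zero_of_mem_closure_range_horo hξ.1, sub_zero] at hlip
  have hyb : dist y b ≤ u := mem_closedBall.mp hyK
  suffices hξy : u ≤ ξ y from ⟨y, by linarith, by linarith⟩
  refine le_of_forall_pos_lt_add fun ε hε => ?_
  have hunif : ∀ᶠ f in 𝓝 ξ, ∀ z ∈ closedBall b u, dist (ξ z) (f z) < ε :=
    tendstoUniformlyOn_iff.mp
      (ContinuousMap.tendsto_iff_forall_isCompact_tendstoUniformlyOn.mp tendsto_id _ hK) ε hε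
  have hne : ∀ᶠ f in 𝓝 ξ, f ≠ horo b b := eventually_ne_nhds fun h => hξ.2 ⟨b, h.symm⟩
  obtain ⟨-, ⟨hclose, hxb⟩, x, rfl⟩ := mem_closure_iff_nhds.mp hξ.1 _ (hunif.and hne)
  obtain ⟨ℓ, hℓ, hℓ0, hℓx⟩ :=
    exists_isometry_apply_zero_apply_dist hU hS fun h : b = x => hxb (h ▸ rfl)
  have hℓd : ∀ r s, dist (ℓ r) (ℓ s) = |r - s| := fun r s => by rw [hℓ.dist_eq, Real.dist_eq]
  have hzb : dist (ℓ (-u)) b = u := by rw [← hℓ0, hℓd]; simp [hu.le]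
  have hxz : dist x (ℓ (-u)) = dist b x + u := by
    rw [← hℓx, hℓd, hℓx, sub_neg_eq_add, abs_of_nonneg (by positivity)]
  have hz := hclose (ℓ (-u)) (mem_closedBall.mpr hzb.le)
  simp only [horo, ContinuousMap.coe_mk, hxz, dist_comm x b] at hz
  have hzy : ξ (ℓ (-u)) ≤ ξ y := hymax (mem_closedBall.mpr hzb.le)
  rw [Real.dist_eq, abs_lt] at hz
  linarith [hz.1]

lemma apply_eq_neg_of_mem_horoboundary [ProperSpace X] (hU : UniquelyGeodesic X)
    (hS : Straight X) (hξ : ξ ∈ horoboundary b) {ℓ : ℝ → X} (hℓ : Isometry ℓ) (hℓ0 : ℓ 0 = b)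
    (hξℓ : ∀ t, 0 ≤ t → ξ (ℓ t) = -t) (r : ℝ) : ξ (ℓ r) = -r := by
  rcases le_or_gt 0 r with hr | hr
  · exact hξℓ r hr
  obtain ⟨y, hyb, hξy⟩ := exists_dist_eq_apply_eq_of_mem_horoboundary hU hS hξ (neg_pos.mpr hr)
  have hbℓ : dist b (ℓ 1) = 1 := by rw [← hℓ0, hℓ.dist_eq, Real.dist_eq]; norm_num
  have hy₁ : dist y (ℓ 1) = -r + 1 := by
    have := sub_le_dist_of_mem_closure_range_horo hξ.1 y (ℓ 1)
    rw [hξy, hξℓ 1 zero_le_one] at this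
    linarith [dist_triangle y b (ℓ 1)]
  have hyℓ := eq_apply_neg_of_dist_eq hU hS hℓ (neg_pos.mpr hr) (hℓ0 ▸ hyb) hy₁
  rw [neg_neg] at hyℓ
  rw [← hyℓ, hξy]

end Horofunction

lemma HasDerivAt.of_le_of_le {f g h : ℝ → ℝ} {D x : ℝ} (hf : HasDerivAt f D x)
    (hh : HasDerivAt h D x) (hfg : ∀ t, f t ≤ g t) (hgh : ∀ t, g t ≤ h t) (hfx : f x = g x)
    (hhx : h x = g x) : HasDerivAt g D x := by
  rw [hasDerivAt_iff_isLittleO, Asymptotics.isLittleO_iff] at hf hh ⊢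
  intro c hc
  filter_upwards [hf hc, hh hc] with t hft hht
  simp only [smul_eq_mul, Real.norm_eq_abs] at hft hht ⊢
  have hfgt := hfg t
  have hght := hgh t
  rw [abs_le] at hft hht ⊢
  constructor <;> linarith [hft.1, hht.2]

lemma C1AlongGeodesics.differentiableAt_dist (hC1 : C1AlongGeodesics X) {α : ℝ → X}
    (hα : Isometry α) {p : X} {t₀ : ℝ} (hp : p ≠ α t₀) :
    DifferentiableAt ℝ (fun t => dist (α t) p) t₀ := by
  by_cases hpα : p ∈ range α
  · obtain ⟨r, rfl⟩ := hpα
    simp_rw [hα.dist_eq, Real.dist_eq]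
    exact (differentiableAt_id.sub_const r).abs (sub_ne_zero.mpr fun h => hp (h ▸ rfl))
  · exact (hC1 α hα).1 p hpα t₀

lemma C1AlongGeodesics.hasDerivAt_comp_of_sub_le_dist (hC1 : C1AlongGeodesics X) {α ℓ : ℝ → X}
    (hα : Isometry α) (hℓ : Isometry ℓ) {f : X → ℝ} (hf : ∀ y z, f y - f z ≤ dist y z)
    (hfℓ : ∀ r, f (ℓ r) = -r) {s₀ : ℝ} (hs₀ : α 0 = ℓ s₀) :
    HasDerivAt (fun t => f (α t)) (deriv (fun t => dist (α t) (ℓ (s₀ + 1))) 0) 0 := by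
  set p := ℓ (s₀ + 1)
  set q := ℓ (s₀ - 1)
  have hℓd : ∀ r s, dist (ℓ r) (ℓ s) = |r - s| := fun r s => by rw [hℓ.dist_eq, Real.dist_eq]
  have hp0 : dist (α 0) p = 1 := by rw [hs₀, hℓd]; norm_num
  have hq0 : dist (α 0) q = 1 := by rw [hs₀, hℓd]; norm_num
  have hpq : dist p q = 2 := by rw [hℓd]; norm_num
  have hp : p ≠ α 0 := fun h => by rw [h, dist_self] at hp0; exact zero_ne_one hp0
  have hq : q ≠ α 0 := fun h => by rw [h, dist_self] at hq0; exact zero_ne_one hq0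
  have hDp := (hC1.differentiableAt_dist hα hp).hasDerivAt
  have hDq := (hC1.differentiableAt_dist hα hq).hasDerivAt
  have hmin : IsLocalMin (fun t => dist (α t) p + dist (α t) q) 0 :=
    Eventually.of_forall fun t => by
      linarith [dist_triangle p (α t) q, dist_comm p (α t)]
  have hsum := hmin.hasDerivAt_eq_zero (hDp.add hDq)
  have hlow : HasDerivAt (fun t => -(s₀ - 1) - dist (α t) q)
      (deriv (fun t => dist (α t) p) 0) 0 := by
    rw [eq_neg_of_add_eq_zero_left hsum]
    exact hDq.const_sub _
  have hfα0 : f (α 0) = -s₀ := by rw [hs₀, hfℓ]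
  refine hlow.of_le_of_le (hDp.sub_const (s₀ + 1)) (fun t => ?_) (fun t => ?_) ?_ ?_
  · linarith [hf q (α t), hfℓ (s₀ - 1), dist_comm q (α t)]
  · linarith [hf (α t) p, hfℓ (s₀ + 1)]
  · simp only [hq0, hfα0]
    ring
  · simp only [hp0, hfα0]
    ring

theorem statement16_general [ProperSpace X] (hU : UniquelyGeodesic X) (hS : Straight X)
    (hC1 : C1AlongGeodesics X)
    (b : X) (γ : GeodesicRay X b)
    (α : ℝ → X) (hα : Isometry α) (hα0 : α 0 ∈ Set.range ⇑γ.1) :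
    ∃ D : ℝ, ∀ ξ : C(X, ℝ), ξ ∈ horoboundary b → (∀ t : ℝ≥0, ξ (γ.1 t) = -(t : ℝ)) →
      HasDerivAt (fun t : ℝ => ξ (α t)) D 0 := by
  obtain ⟨ℓ, hℓ, hℓγ⟩ := hS.exists_isometry_extend_geodesicRay γ
  obtain ⟨s₀, hs₀⟩ := hα0
  have hℓ0 : ℓ 0 = b := by simpa using (hℓγ 0).trans γ.2.2
  refine ⟨deriv (fun t => dist (α t) (ℓ (s₀ + 1))) 0, fun ξ hξ hξγ => ?_⟩
  have hξℓ : ∀ t : ℝ, 0 ≤ t → ξ (ℓ t) = -t := fun t ht => by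
    rw [← Real.coe_toNNReal t ht, hℓγ, hξγ]
  exact hC1.hasDerivAt_comp_of_sub_le_dist hα hℓ (sub_le_dist_of_mem_closure_range_horo hξ.1)
    (apply_eq_neg_of_mem_horoboundary hU hS hξ hℓ hℓ0 hξℓ) (by rw [hℓγ, hs₀])

/-- If `X` is moreover C¹ along geodesics with constant distance variation,
`γ` is a geodesic ray based at `b` and `α` is a bi-infinite geodesic with `α 0` on `γ`,
then `t ↦ ξ (α t)` is differentiable at `0`, with the same derivative for every horofunction
`ξ` in the fiber `Π_b⁻¹ (γ)`. -/
theorem statement16 [ProperSpace X] (hU : UniquelyGeodesic X) (hS : Straight X)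
    (hC1 : C1AlongGeodesics X) (hCDV : ConstantDistanceVariation X)
    (b : X) (γ : GeodesicRay X b)
    (α : ℝ → X) (hα : Isometry α) (hα0 : α 0 ∈ Set.range ⇑γ.1) :
    ∃ D : ℝ, ∀ ξ : C(X, ℝ), ξ ∈ horoboundary b → (∀ t : ℝ≥0, ξ (γ.1 t) = -(t : ℝ)) →
      HasDerivAt (fun t : ℝ => ξ (α t)) D 0 :=
  statement16_general hU hS hC1 b γ α hα hα0
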